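/- Let P be a tripartite box with binary outputs a,b ∈ {0,1} for Alice and Bob, inputs x,y ∈ {1,…,m} (m ≥ 2), and finite input set Z and output set C for Eve, and suppose P satisfies the full tripartite no-signaling constraints (the marginal output distribution of every subset of parties is independent of the inputs of the complementary set of parties). Let I := Σ_{(x,y): x=y or x=y+1} P_{AB}(a⊕b=1|x,y) + P_{AB}(a⊕b=0|1,m) be the chained Bell expression of the Alice–Bob marginal. Then: (1) for all x, y, z, D( P_{A,C|x,y,z}, Pᵘ_A × P_{C|z} ) ≤ I/2, where Pᵘ_A(a) = 1/2 and P_{C|z} is Eve's marginal; and (2) for all a ∈ {0,1}, x, y, z with P_{A|X}(a|x) > 0, D( P_{C|x,y,z,a}, P_{C|z} ) ≤ I, where P_{C|x,y,z,a}(c) = (Σ_b P(a,b,c|x,y,z))/P_{A|X}(a|x). -/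

import Mathlib

/-!
Fix Eve's input `z` and output `c`. The slice `(x, y, a, b) ↦ P(a, b, c | x, y, z)` is an
unnormalised no-signaling box of Alice and Bob, so Alice's marginal `A x` and Bob's marginal
`B y` of the output `1` are well defined. Each pair `(x, y)` of the chain
`(0,0), (1,0), (1,1), …, (m-1,m-1)` bounds `|A x - B y|` by the slice's weight on `a ≠ b`, and
the pair `(0, m-1)` bounds `|A 0 + B (m-1) - N|` by its weight on `a = b`, where `N` is the total
weight of the slice. Walking around the chain from `A x` to `N - A x` bounds Alice's bias
`|2 A x - N|` by the chained Bell value of the slice; summing over `c` gives `I`, because Eve's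
input does not signal to Alice and Bob. Part (1) is half of this sum. For part (2), let `u` and
`v` be Eve's weights jointly with Alice's outputs `a` and `!a`, of totals `p` and `q`: her
distribution is the mixture `u + v`, whose distance from `u / p` is `Σ |q u - p v| / (2 p)`, and
`Σ |q u - p v| ≤ 2 min(p, q) Σ |u - v|` because `Σ (q u - p v) = 0`.
-/

open Finset

theorem abs_two_mul_sub_le_sum_abs_sub_add (s : ℕ → ℝ) (N : ℝ) {k n : ℕ} (hk : k ≤ n) :
    |2 * s k - N| ≤ ∑ i ∈ range n, |s (i + 1) - s i| + |s 0 + s n - N| := by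
  have h₀ := dist_le_range_sum_dist s k
  have hn := dist_le_Ico_sum_dist s hk
  rw [dist_comm] at h₀
  simp only [dist_comm (s _) (s (_ + 1)), Real.dist_eq] at h₀ hn
  rw [← sum_range_add_sum_Ico _ hk]
  calc |2 * s k - N| = |(s k - s 0) + (s k - s n) + (s 0 + s n - N)| := by ring_nf
    _ ≤ |s k - s 0| + |s k - s n| + |s 0 + s n - N| := abs_add_three _ _ _
    _ ≤ _ := by gcongr

theorem sum_abs_eq_two_mul_sum_posPart {ι : Type*} (s : Finset ι) (f : ι → ℝ)
    (hf : ∑ i ∈ s, f i = 0) : ∑ i ∈ s, |f i| = 2 * ∑ i ∈ s, (f i)⁺ := by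
  rw [← add_zero (∑ i ∈ s, |f i|), ← hf, ← sum_add_distrib, mul_sum]
  simp only [abs_add_eq_two_nsmul_posPart, nsmul_eq_mul, Nat.cast_ofNat]

theorem sum_abs_mul_sub_mul_le {ι : Type*} (s : Finset ι) {u v : ι → ℝ} {p q : ℝ}
    (hv : ∀ i ∈ s, 0 ≤ v i) (hq : 0 ≤ q) (hqp : q ≤ p)
    (hu_sum : ∑ i ∈ s, u i = p) (hv_sum : ∑ i ∈ s, v i = q) :
    ∑ i ∈ s, |q * u i - p * v i| ≤ 2 * q * ∑ i ∈ s, |u i - v i| := by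
  have hzero : ∑ i ∈ s, (q * u i - p * v i) = 0 := by
    rw [sum_sub_distrib, ← mul_sum, ← mul_sum, hu_sum, hv_sum, mul_comm, sub_self]
  rw [sum_abs_eq_two_mul_sum_posPart s _ hzero, mul_assoc, mul_sum s _ q]
  gcongr with i hi
  refine sup_le ?_ (by positivity)
  calc q * u i - p * v i ≤ q * (u i - v i) := by nlinarith [hv i hi]
    _ ≤ q * |u i - v i| := by gcongr; exact le_abs_self _

theorem half_sum_abs_div_sum_sub_add_le {ι : Type*} (s : Finset ι) {u v : ι → ℝ}
    (hu : ∀ i ∈ s, 0 ≤ u i) (hv : ∀ i ∈ s, 0 ≤ v i)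
    (hsum : ∑ i ∈ s, u i + ∑ i ∈ s, v i = 1) (hpos : 0 < ∑ i ∈ s, u i) :
    (1 / 2) * ∑ i ∈ s, |u i / ∑ j ∈ s, u j - (u i + v i)| ≤ ∑ i ∈ s, |u i - v i| := by
  set p := ∑ j ∈ s, u j
  set q := ∑ j ∈ s, v j
  have hq : 0 ≤ q := sum_nonneg hv
  have hmix : ∀ i, u i / p - (u i + v i) = (q * u i - p * v i) / p := fun i => by
    rw [eq_div_iff hpos.ne', sub_mul, div_mul_cancel₀ _ hpos.ne']
    linear_combination (-u i) * hsum
  have hbound : ∑ i ∈ s, |q * u i - p * v i| ≤ 2 * p * ∑ i ∈ s, |u i - v i| := by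
    rcases le_total q p with hqp | hpq
    · calc _ ≤ 2 * q * ∑ i ∈ s, |u i - v i| := sum_abs_mul_sub_mul_le s hv hq hqp rfl rfl
        _ ≤ 2 * p * ∑ i ∈ s, |u i - v i| := by gcongr
    · have := sum_abs_mul_sub_mul_le s hu hpos.le hpq rfl rfl
      simp only [abs_sub_comm (p * v _), abs_sub_comm (v _)] at this
      exact this
  simp only [hmix, abs_div, abs_of_pos hpos, ← sum_div]
  rw [← mul_div_assoc, div_le_iff₀ hpos]
  linarith

theorem sum_bool_eq_add_not {M : Type*} [AddCommMonoid M] (f : Bool → M) (a : Bool) :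
    ∑ a', f a' = f a + f !a := by
  cases a <;> simp [add_comm]

theorem sum_abs_sub_half_sum_bool (f : Bool → ℝ) :
    ∑ a, |f a - (1 / 2) * ∑ a', f a'| = |f true - f false| := by
  simp only [Fintype.sum_bool]
  rw [show f true - 1 / 2 * (f true + f false) = (f true - f false) / 2 by ring,
    show f false - 1 / 2 * (f true + f false) = -((f true - f false) / 2) by ring, abs_neg,
    abs_div, abs_two]
  ring

theorem half_sum_sum_abs_sub_half_sum_le {ι : Type*} (s : Finset ι) (M : Bool → ι → ℝ)
    {ε : ℝ} (h : ∑ i ∈ s, |M true i - M false i| ≤ ε) :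
    (1 / 2) * ∑ a, ∑ i ∈ s, |M a i - (1 / 2) * ∑ a', M a' i| ≤ ε / 2 := by
  rw [sum_comm]
  simp only [sum_abs_sub_half_sum_bool fun a => M a _]
  linarith

theorem half_sum_abs_div_sum_sub_sum_bool_le {ι : Type*} (s : Finset ι) (M : Bool → ι → ℝ)
    (hM : ∀ a, ∀ i ∈ s, 0 ≤ M a i) (hsum : ∑ a, ∑ i ∈ s, M a i = 1) (a : Bool)
    (hpos : 0 < ∑ i ∈ s, M a i) :
    (1 / 2) * ∑ i ∈ s, |M a i / ∑ j ∈ s, M a j - ∑ a', M a' i| ≤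
      ∑ i ∈ s, |M true i - M false i| := by
  simp only [sum_bool_eq_add_not (fun a' => M a' _) a]
  rw [sum_bool_eq_add_not (fun a' => ∑ i ∈ s, M a' i) a] at hsum
  refine (half_sum_abs_div_sum_sub_add_le s (hM a) (hM !a) hsum hpos).trans_eq ?_
  cases a
  exacts [sum_congr rfl fun i _ => abs_sub_comm _ _, rfl]

def chainPairs (m : ℕ) : Finset (Fin m × Fin m) :=
  univ.filter fun p => p.1 = p.2 ∨ p.1.val = p.2.val + 1

open Fin.NatCast in
theorem sum_range_eq_sum_chainPairs {M : Type*} [AddCommMonoid M] {m : ℕ} [NeZero m]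
    (g : Fin m → Fin m → M) :
    ∑ k ∈ range (2 * m - 1), g (((k + 1) / 2 : ℕ) : Fin m) ((k / 2 : ℕ) : Fin m) =
      ∑ p ∈ chainPairs m, g p.1 p.2 := by
  have hval : ∀ {n : ℕ}, n < m → ((n : Fin m) : ℕ) = n := Fin.val_cast_of_lt
  refine sum_nbij' (fun k => (((k + 1) / 2 : ℕ), ((k / 2 : ℕ) : Fin m)))
    (fun p => p.1.val + p.2.val) ?_ ?_ ?_ ?_ (fun _ _ => rfl)
  · intro k hk
    simp only [mem_range] at hk
    simp only [chainPairs, mem_filter, mem_univ, true_and, Fin.ext_iff,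
      hval (show (k + 1) / 2 < m by omega), hval (show k / 2 < m by omega)]
    omega
  · intro p hp
    simp only [chainPairs, mem_filter, mem_univ, true_and, Fin.ext_iff] at hp
    simp only [mem_range]
    omega
  · intro k hk
    simp only [mem_range] at hk
    simp only [hval (show (k + 1) / 2 < m by omega), hval (show k / 2 < m by omega)]
    omega
  · intro p hp
    simp only [chainPairs, mem_filter, mem_univ, true_and, Fin.ext_iff] at hp
    ext
    · simp only [hval (show (p.1.val + p.2.val + 1) / 2 < m by omega)]; omega
    · simp only [hval (show (p.1.val + p.2.val) / 2 < m by omega)]; omega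

theorem abs_sum_true_sub_sum_true_le {R : Bool → Bool → ℝ} (hR : ∀ a b, 0 ≤ R a b) :
    |∑ b, R true b - ∑ a, R a true| ≤ R true false + R false true := by
  simp only [Fintype.sum_bool]
  rw [abs_le]
  constructor <;> linarith [hR true false, hR false true]

theorem abs_sum_true_add_sum_true_sub_le {R : Bool → Bool → ℝ} (hR : ∀ a b, 0 ≤ R a b) :
    |∑ b, R true b + ∑ a, R a true - ∑ a, ∑ b, R a b| ≤ R true true + R false false := by
  simp only [Fintype.sum_bool]
  rw [abs_le]
  constructor <;> linarith [hR true true, hR false false]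

section Box

variable {m : ℕ} (Q : Fin m → Fin m → Bool → Bool → ℝ)

structure IsNoSignaling : Prop where
  alice : ∀ x y y' a, ∑ b, Q x y a b = ∑ b, Q x y' a b
  bob : ∀ x x' y b, ∑ a, Q x y a b = ∑ a, Q x' y a b

/-- `Q` need not be normalised: it is applied to the slices of a tripartite box at a fixed
output of Eve. -/
def chainedBell (hm : 0 < m) : ℝ :=
  ∑ p ∈ chainPairs m, (Q p.1 p.2 true false + Q p.1 p.2 false true)
    + (Q ⟨0, hm⟩ ⟨m - 1, by omega⟩ true true
      + Q ⟨0, hm⟩ ⟨m - 1, by omega⟩ false false)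

open Fin.NatCast in
/-- Alice's (`k = 2 i`) and Bob's (`k = 2 i + 1`) marginals of the output `1`, interleaved so
that consecutive terms are compared on the input pair `((k + 1) / 2, k / 2)` of the chain. -/
def chainMarginal [NeZero m] (k : ℕ) : ℝ :=
  if k % 2 = 0 then ∑ b, Q (k / 2 : ℕ) (k / 2 : ℕ) true b
  else ∑ a, Q (k / 2 : ℕ) (k / 2 : ℕ) a true

variable {Q}

theorem chainedBell_sum {ι : Type*} (s : Finset ι)
    (F : ι → Fin m → Fin m → Bool → Bool → ℝ) (hm : 0 < m) :
    chainedBell (fun x y a b => ∑ i ∈ s, F i x y a b) hm =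
      ∑ i ∈ s, chainedBell (F i) hm := by
  simp only [chainedBell, sum_add_distrib]
  rw [sum_comm (s := chainPairs m), sum_comm (s := chainPairs m)]

theorem IsNoSignaling.sum_sum_eq (hQ : IsNoSignaling Q) (x x' y y' : Fin m) :
    ∑ a, ∑ b, Q x y a b = ∑ a, ∑ b, Q x' y' a b :=
  calc ∑ a, ∑ b, Q x y a b = ∑ a, ∑ b, Q x y' a b :=
        sum_congr rfl fun a _ => hQ.alice x y y' a
    _ = ∑ b, ∑ a, Q x' y' a b := by
        rw [sum_comm]; exact sum_congr rfl fun b _ => hQ.bob x x' y' b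
    _ = ∑ a, ∑ b, Q x' y' a b := sum_comm

section Chain

open Fin.NatCast

variable [NeZero m]

variable (Q) in
theorem chainMarginal_two_mul (i : ℕ) : chainMarginal Q (2 * i) = ∑ b, Q i i true b := by
  simp only [chainMarginal, Nat.mul_mod_right, if_true, Nat.mul_div_cancel_left i two_pos]

variable (Q) in
theorem chainMarginal_two_mul_add_one (i : ℕ) :
    chainMarginal Q (2 * i + 1) = ∑ a, Q i i a true := by
  simp only [chainMarginal, show (2 * i + 1) % 2 = 1 by omega, show (2 * i + 1) / 2 = i by omega]
  rfl

theorem IsNoSignaling.abs_chainMarginal_succ_sub_le (hQ : IsNoSignaling Q)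
    (hnonneg : ∀ x y a b, 0 ≤ Q x y a b) (k : ℕ) :
    |chainMarginal Q (k + 1) - chainMarginal Q k| ≤
      Q (((k + 1) / 2 : ℕ) : Fin m) ((k / 2 : ℕ) : Fin m) true false +
        Q (((k + 1) / 2 : ℕ) : Fin m) ((k / 2 : ℕ) : Fin m) false true := by
  obtain ⟨i, rfl | rfl⟩ := Nat.even_or_odd' k
  · rw [chainMarginal_two_mul, chainMarginal_two_mul_add_one, abs_sub_comm,
      show (2 * i + 1) / 2 = i by omega, show 2 * i / 2 = i by omega]
    exact abs_sum_true_sub_sum_true_le (hnonneg _ _)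
  · rw [show 2 * i + 1 + 1 = 2 * (i + 1) by ring, chainMarginal_two_mul,
      chainMarginal_two_mul_add_one, hQ.alice _ _ (i : Fin m), hQ.bob _ ((i + 1 : ℕ) : Fin m),
      show 2 * (i + 1) / 2 = i + 1 by omega, show (2 * i + 1) / 2 = i by omega]
    exact abs_sum_true_sub_sum_true_le (hnonneg _ _)

theorem IsNoSignaling.abs_chainMarginal_zero_add_last_sub_le (hQ : IsNoSignaling Q)
    (hnonneg : ∀ x y a b, 0 ≤ Q x y a b) (hm : 0 < m) (x y : Fin m) :
    |chainMarginal Q 0 + chainMarginal Q (2 * m - 1) - ∑ a, ∑ b, Q x y a b| ≤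
      Q ⟨0, hm⟩ ⟨m - 1, by omega⟩ true true
        + Q ⟨0, hm⟩ ⟨m - 1, by omega⟩ false false := by
  have h₀ := chainMarginal_two_mul Q 0
  have h₁ := chainMarginal_two_mul_add_one Q (m - 1)
  rw [mul_zero, show ((0 : ℕ) : Fin m) = ⟨0, hm⟩ from Fin.ext (Fin.val_cast_of_lt hm)] at h₀
  rw [show 2 * (m - 1) + 1 = 2 * m - 1 by omega,
    show ((m - 1 : ℕ) : Fin m) = ⟨m - 1, by omega⟩ from
      Fin.ext (Fin.val_cast_of_lt (by omega))] at h₁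
  rw [h₀, h₁, hQ.alice _ _ ⟨m - 1, by omega⟩, hQ.bob _ ⟨0, hm⟩,
    hQ.sum_sum_eq x ⟨0, hm⟩ y ⟨m - 1, by omega⟩]
  exact abs_sum_true_add_sum_true_sub_le (hnonneg _ _)

end Chain

theorem IsNoSignaling.abs_sub_le_chainedBell (hQ : IsNoSignaling Q)
    (hnonneg : ∀ x y a b, 0 ≤ Q x y a b) (hm : 0 < m) (x y : Fin m) :
    |∑ b, Q x y true b - ∑ b, Q x y false b| ≤ chainedBell Q hm := by
  have : NeZero m := ⟨hm.ne'⟩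
  set N := ∑ a, ∑ b, Q x y a b
  have hx : chainMarginal Q (2 * x) = ∑ b, Q x y true b := by
    rw [chainMarginal_two_mul Q, Fin.cast_val_eq_self]; exact hQ.alice x x y true
  calc |∑ b, Q x y true b - ∑ b, Q x y false b| = |2 * chainMarginal Q (2 * x) - N| := by
        rw [hx]; simp only [N, Fintype.sum_bool]; ring_nf
    _ ≤ ∑ k ∈ range (2 * m - 1), |chainMarginal Q (k + 1) - chainMarginal Q k|
          + |chainMarginal Q 0 + chainMarginal Q (2 * m - 1) - N| :=
        abs_two_mul_sub_le_sum_abs_sub_add _ N (by omega)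
    _ ≤ _ := add_le_add (sum_le_sum fun k _ => hQ.abs_chainMarginal_succ_sub_le hnonneg k)
          (hQ.abs_chainMarginal_zero_add_last_sub_le hnonneg hm x y)
    _ = chainedBell Q hm := by
        rw [sum_range_eq_sum_chainPairs (fun p q => Q p q true false + Q p q false true)]; rfl

end Box

theorem chained_bell_security_no_signaling
    (m : ℕ) (hm : 2 ≤ m) {Z C : Type*} [Fintype Z] [Fintype C] (z₀ : Z)
    (P : Fin m → Fin m → Z → Bool → Bool → C → ℝ)
    (hnonneg : ∀ x y z a b c, 0 ≤ P x y z a b c)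
    (hsum : ∀ x y z, ∑ a, ∑ b, ∑ c, P x y z a b c = 1)
    -- full tripartite no-signaling constraints
    (hNS_AB : ∀ x y z z' a b, ∑ c, P x y z a b c = ∑ c, P x y z' a b c)
    (hNS_AC : ∀ x y y' z a c, ∑ b, P x y z a b c = ∑ b, P x y' z a b c)
    (hNS_BC : ∀ x x' y z b c, ∑ a, P x y z a b c = ∑ a, P x' y z a b c)
    -- the chained Bell expression of the Alice–Bob marginal
    (I : ℝ)
    (hI : I =
      (∑ p ∈ Finset.univ.filter
          (fun p : Fin m × Fin m => p.1 = p.2 ∨ p.1.val = p.2.val + 1),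
        ∑ c, (P p.1 p.2 z₀ true false c + P p.1 p.2 z₀ false true c))
      + ∑ c, (P ⟨0, by omega⟩ ⟨m - 1, by omega⟩ z₀ true true c
              + P ⟨0, by omega⟩ ⟨m - 1, by omega⟩ z₀ false false c)) :
    -- (1) D(P_{A,C|x,y,z}, Pᵘ_A × P_{C|z}) ≤ I/2
    (∀ x y z,
      (1 / 2) * ∑ a, ∑ c,
          |(∑ b, P x y z a b c) - (1 / 2) * (∑ a', ∑ b, P x y z a' b c)| ≤ I / 2) ∧
    -- (2) D(P_{C|x,y,z,a}, P_{C|z}) ≤ I whenever P_{A|X}(a|x) > 0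
    (∀ a x y z, 0 < (∑ b, ∑ c, P x y z a b c) →
      (1 / 2) * ∑ c,
          |(∑ b, P x y z a b c) / (∑ b, ∑ c', P x y z a b c')
            - ∑ a', ∑ b, P x y z a' b c| ≤ I) := by
  have hm₀ : 0 < m := by omega
  have hslice : ∀ z c, IsNoSignaling fun x y a b => P x y z a b c := fun z c =>
    ⟨fun x y y' a => hNS_AC x y y' z a c, fun x x' y b => hNS_BC x x' y z b c⟩
  have hbell : ∀ z, ∑ c, chainedBell (fun x y a b => P x y z a b c) hm₀ = I := by
    intro z
    have hAB : (fun x y a b => ∑ c, P x y z a b c) = fun x y a b => ∑ c, P x y z₀ a b c := by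
      funext x y a b; exact hNS_AB x y z z₀ a b
    rw [← chainedBell_sum, hAB, hI]
    simp only [chainedBell, chainPairs, sum_add_distrib]
  have hbias : ∀ x y z, ∑ c, |∑ b, P x y z true b c - ∑ b, P x y z false b c| ≤ I :=
    fun x y z => (hbell z).symm ▸ sum_le_sum fun c _ =>
      (hslice z c).abs_sub_le_chainedBell (fun x y a b => hnonneg x y z a b c) hm₀ x y
  refine ⟨fun x y z => half_sum_sum_abs_sub_half_sum_le univ _ (hbias x y z),
    fun a x y z hpos => ?_⟩
  have hden : ∀ a, ∑ b, ∑ c, P x y z a b c = ∑ c, ∑ b, P x y z a b c := fun a => sum_comm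
  rw [hden] at hpos ⊢
  refine (half_sum_abs_div_sum_sub_sum_bool_le univ (fun a c => ∑ b, P x y z a b c)
    (fun a c _ => sum_nonneg fun b _ => hnonneg _ _ _ _ _ _) ?_ a hpos).trans (hbias x y z)
  rw [← hsum x y z]
  exact sum_congr rfl fun a _ => sum_comm
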